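/- arXiv:0801.2575 — 3 statements merged into one kernel-verified Lean document; each statement's English description precedes it below -/
import Mathlib

section
/- For the simple type U = X→(X→X)→X over the single base variable X, the finite live strategies on the P-backtracking game 𝒫G(Δ_U) are exactly the strategies τ_n for n ∈ ℕ, where τ_n is the set of all prefixes of the dialogue ⟨0,1⟩⟨1,2⟩⟨2,1⟩⟨1,2⟩⟨4,1⟩⟨1,2⟩⟨6,1⟩…⟨1,2⟩⟨2n,1⟩⟨1,1⟩ of length 2n+2 containing n occurrences of the label 2. In particular, the finite live strategies on 𝒫G(Δ_U) are in bijection with ℕ. -/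
namespace Hypergames

/-! Generic transition systems, games, dialogues and strategies. -/

/-- The state reached from `q` by following the labels `ls` (if defined). -/
def reach {Q L : Type} (tr : Q → L → Option Q) : Q → List L → Option Q
  | q, [] => some q
  | q, l :: ls => (tr q l).bind fun q' => reach tr q' ls

/-- The game (set of traces) of a transition system with transition
function `tr` and initial state `star`. -/
def gameOf {Q L : Type} (tr : Q → L → Option Q) (star : Q) : Set (List L) :=
  { ls | (reach tr star ls).isSome }

/-- A set of `M`-traces is a game if it contains the empty trace and the
predecessor of each of its nonempty members. -/
def IsGame {M : Type} (G : Set (List M)) : Prop :=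
  [] ∈ G ∧ ∀ p ∈ G, p ≠ [] → p.dropLast ∈ G

/-- The pointer of the `j`-th element (1-indexed) of a dialogue. -/
def pointer {M : Type} (d : List (ℕ × M)) (j : ℕ) : Option ℕ :=
  (d[j-1]?).map Prod.fst

/-- A dialogue over `M`: an `(ℕ × M)`-trace `⟨α₁,m₁⟩…⟨α_k,m_k⟩` such that
`i - αᵢ ∈ {1,3,5,…}` for each `i`. -/
def IsDialogue {M : Type} (d : List (ℕ × M)) : Prop :=
  ∀ j, 1 ≤ j → j ≤ d.length → ∀ α, pointer d j = some α → α < j ∧ Odd (j - α)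

/-- A chain of (1-indexed) positions `d₁ < d₂ < ⋯ < dₙ` of the dialogue `d`
with `α_{d₁} = 0` and `α_{d_j} = d_{j-1}`; such a chain determines a thread. -/
def IsChain {M : Type} (d : List (ℕ × M)) (ds : List ℕ) : Prop :=
  (∀ j ∈ ds, 1 ≤ j ∧ j ≤ d.length) ∧
  (∀ j, ds.head? = some j → pointer d j = some 0) ∧
  List.Chain' (fun a b => pointer d b = some a) ds ∧
  List.Chain' (· < ·) ds

/-- The thread (sequence of moves) along a chain of positions. -/
def threadOf {M : Type} (d : List (ℕ × M)) (ds : List ℕ) : List M :=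
  ds.filterMap fun j => (d[j-1]?).map Prod.snd

/-- A dialogue respects `G` if all its threads are in `G`. -/
def Respects {M : Type} (G : Set (List M)) (d : List (ℕ × M)) : Prop :=
  ∀ ds, IsChain d ds → threadOf d ds ∈ G

/-- The backtracking game `ℬG`: all dialogues over `M` respecting `G`. -/
def BG {M : Type} (G : Set (List M)) : Set (List (ℕ × M)) :=
  { d | IsDialogue d ∧ Respects G d }

/-- The `P`-backtracking game `𝒫G`: dialogues of `ℬG` in which every
odd-indexed move points to the immediately preceding move. -/
def PG {M : Type} (G : Set (List M)) : Set (List (ℕ × M)) :=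
  { d | d ∈ BG G ∧ ∀ j, Odd j → j ≤ d.length → pointer d j = some (j - 1) }

/-- A strategy (for the second player `P`) on a game `G`. -/
def IsStrategy {M : Type} (G σ : Set (List M)) : Prop :=
  σ ⊆ G ∧ IsGame σ ∧ ∀ p ∈ σ, Odd p.length → ∃! m, p ++ [m] ∈ σ

/-- A strategy is live if it responds to every stimulus. -/
def Live {M : Type} (G σ : Set (List M)) : Prop :=
  ∀ p ∈ σ, Even p.length → ∀ m, p ++ [m] ∈ G → p ++ [m] ∈ σ

/-- The thread ending at position `j` (1-indexed), computed by following
pointers backwards, with explicit fuel (use fuel `j`). -/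
def threadTo {M : Type} (d : List (ℕ × M)) : ℕ → ℕ → List M
  | 0, _ => []
  | fuel + 1, j =>
    match d[j-1]? with
    | none => []
    | some (α, m) => if α = 0 then [m] else threadTo d fuel α ++ [m]

/-! Simple types over a set `V` of type variables, and their games. -/

/-- Simple types generated from type variables by implication `→`. -/
inductive Ty (V : Type) : Type
  | var : V → Ty V
  | arrow : Ty V → Ty V → Ty V

/-- The branches `T₁,…,Tₙ` of a type `T₁→…→Tₙ→X`. -/
def Ty.branches {V : Type} : Ty V → List (Ty V)
  | .var _ => []
  | .arrow A B => A :: Ty.branches B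

/-- The rightmost (head) variable `X` of a type `T₁→…→Tₙ→X`. -/
def Ty.headVar {V : Type} : Ty V → V
  | .var X => X
  | .arrow _ B => Ty.headVar B

/-- The transition function of the transition system `Δ_T`: states are
simple types together with an initial state `⋆` (here `none`), labels are
positive integers (branch choices), with transitions `⋆ →¹ T` and
`(T₁→…→Tₙ→X) →ⁱ Tᵢ` for `1 ≤ i ≤ n`. -/
def tyTrans {V : Type} (T : Ty V) : Option (Ty V) → ℕ → Option (Option (Ty V))
  | none, i => if i = 1 then some (some T) else none
  | some S, i => if 1 ≤ i then (S.branches[i-1]?).map some else none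

/-- The colour of the move at (1-indexed) position `j` of a dialogue on the
game of `Δ_T`: the rightmost variable of the target state of the associated
transition, i.e. of the state reached along the thread ending at `j`. -/
def colourAt {V : Type} (T : Ty V) (d : List (ℕ × ℕ)) (j : ℕ) : Option V :=
  match reach (tyTrans T) none (threadTo d j j) with
  | some (some S) => some S.headVar
  | _ => none

/-- The copycat condition for a dialogue in `𝒫G(Δ_T)`: the colour of every
even-indexed (`P`) move equals the colour of the immediately preceding move. -/
def CopycatDialogue {V : Type} (T : Ty V) (d : List (ℕ × ℕ)) : Prop :=
  ∀ j, Even j → 2 ≤ j → j ≤ d.length → colourAt T d j = colourAt T d (j - 1)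

/-- A strategy satisfies the copycat condition if all its traces do. -/
def CopycatStrategy {V : Type} (T : Ty V) (σ : Set (List (ℕ × ℕ))) : Prop :=
  ∀ d ∈ σ, CopycatDialogue T d

/-- η-expanded β-normal terms of type `T` in context `Γ` (variables in de
Bruijn style: an index into the context): such a term is
`λx₁^{T₁}…λxₙ^{Tₙ}. y N₁ … N_m` where `T = T₁→…→Tₙ→X`, `y` is a variable of
type `U₁→…→U_m→X` among the context extended by `x₁,…,xₙ`, and each `N_j` is
η-expanded β-normal of type `U_j` in the extended context. -/
inductive NF (V : Type) : List (Ty V) → Ty V → Type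
  | mk (Γ : List (Ty V)) (T : Ty V)
      (k : Fin (Γ ++ T.branches).length)
      (hhead : ((Γ ++ T.branches).get k).headVar = T.headVar)
      (args : (j : Fin ((Γ ++ T.branches).get k).branches.length) →
        NF V (Γ ++ T.branches) (((Γ ++ T.branches).get k).branches.get j)) :
      NF V Γ T

/-- The simple type `U = X→(X→X)→X` over the single base variable `X`. -/
def U11 : Ty Unit :=
  .arrow (.var ()) (.arrow (.arrow (.var ()) (.var ())) (.var ()))

/-- The dialogue `⟨0,1⟩⟨1,2⟩⟨2,1⟩⟨1,2⟩⟨4,1⟩…⟨1,2⟩⟨2n,1⟩⟨1,1⟩` of length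
`2n+2` with `n` occurrences of the label `2`. -/
def D11 (n : ℕ) : List (ℕ × ℕ) :=
  (0, 1) :: ((List.range n).flatMap fun j => [(1, 2), (2 * (j + 1), 1)]) ++ [(1, 1)]

/-- The strategy `τ_n`: all prefixes of the dialogue `D11 n`. -/
def tau11 (n : ℕ) : Set (List (ℕ × ℕ)) := { p | p <+: D11 n }

/-!
The game of `U = X→(X→X)→X` consists of the traces `ε, 1, 11, 12, 121`. In a play of
`𝒫G(Δ_U)` every `O`-move (odd position) points to the previous move, so a `P`-move pointing
anywhere but to the initial move would open a thread of length four; hence `P` always points to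
the initial move and plays label `1` or `2`, and `O` can answer only a label `2`, with label `1`.
The plays are thus exactly the prefixes of the dialogues `D11 n`. A live strategy must answer
every `O`-move, so unless it eventually plays label `1` it contains plays of every odd length;
a finite one therefore contains some `D11 n`, and being deterministic it is `τ_n`.
-/

section Dialogue

variable {M : Type}

theorem pointer_append_of_le {q r : List (ℕ × M)} {j : ℕ} (h1 : 1 ≤ j) (hj : j ≤ q.length) :
    pointer (q ++ r) j = pointer q j := by
  rw [pointer, pointer, List.getElem?_append_left (by omega)]

theorem pointer_concat_length (q : List (ℕ × M)) (x : ℕ × M) :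
    pointer (q ++ [x]) (q.length + 1) = some x.1 := by
  simp [pointer]

theorem threadOf_append {q : List (ℕ × M)} {ds : List ℕ} (r : List (ℕ × M))
    (hds : ∀ j ∈ ds, 1 ≤ j ∧ j ≤ q.length) : threadOf (q ++ r) ds = threadOf q ds :=
  List.filterMap_congr fun j hj => by
    rw [List.getElem?_append_left (by have := hds j hj; omega)]

theorem threadOf_concat {q : List (ℕ × M)} {ds : List ℕ} (x : ℕ × M)
    (hds : ∀ j ∈ ds, 1 ≤ j ∧ j ≤ q.length) :
    threadOf (q ++ [x]) (ds ++ [q.length + 1]) = threadOf q ds ++ [x.2] := by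
  rw [threadOf, List.filterMap_append, ← threadOf, threadOf_append _ hds]
  simp

theorem isChain_singleton {d : List (ℕ × M)} {a : ℕ} (h1 : 1 ≤ a) (ha : a ≤ d.length)
    (hp : pointer d a = some 0) : IsChain d [a] :=
  ⟨by simpa using ⟨h1, ha⟩, by simpa using hp, List.isChain_singleton _, List.isChain_singleton _⟩

theorem IsChain.concat {d : List (ℕ × M)} {ds : List ℕ} {a b : ℕ} (h : IsChain d ds)
    (ha : ds.getLast? = some a) (hab : a < b) (hb : b ≤ d.length) (hp : pointer d b = some a) :
    IsChain d (ds ++ [b]) := by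
  obtain ⟨hbd, hhd, hptr, hlt⟩ := h
  have hne : ds ≠ [] := by rintro rfl; simp at ha
  refine ⟨fun j hj => ?_, fun j hj => hhd j ?_, ?_, ?_⟩
  · rcases List.mem_append.1 hj with hj | hj
    · exact hbd j hj
    · rw [List.mem_singleton.1 hj]; exact ⟨by omega, hb⟩
  · rwa [List.head?_append_of_ne_nil _ hne] at hj
  · exact List.isChain_append.2 ⟨hptr, List.isChain_singleton _, by simp [ha, hp]⟩
  · exact List.isChain_append.2 ⟨hlt, List.isChain_singleton _, by simp [ha, hab]⟩

theorem IsChain.append {q : List (ℕ × M)} {ds : List ℕ} (r : List (ℕ × M)) (h : IsChain q ds) :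
    IsChain (q ++ r) ds := by
  obtain ⟨hbd, hhd, hptr, hlt⟩ := h
  have hq : ∀ j ∈ ds, pointer (q ++ r) j = pointer q j := fun j hj =>
    pointer_append_of_le (hbd j hj).1 (hbd j hj).2
  refine ⟨fun j hj => ⟨(hbd j hj).1, (hbd j hj).2.trans (by simp)⟩, fun j hj => ?_,
    hptr.imp_of_mem_imp fun a b _ hb h => (hq b hb).trans h, hlt⟩
  rw [hq j (List.mem_of_mem_head? hj)]
  exact hhd j hj

theorem mem_PG_of_append_mem {G : Set (List M)} {q r : List (ℕ × M)} (h : q ++ r ∈ PG G) :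
    q ∈ PG G := by
  obtain ⟨⟨hdia, hresp⟩, hodd⟩ := h
  refine ⟨⟨fun j h1 hj α hα => ?_, fun ds hc => ?_⟩, fun j hj hjq => ?_⟩
  · exact hdia j h1 (by grind) α (by rwa [pointer_append_of_le h1 hj])
  · rw [← threadOf_append r hc.1]
    exact hresp ds (hc.append r)
  · rw [← pointer_append_of_le (r := r) hj.pos hjq]
    exact hodd j hj (by grind)

theorem IsGame.mem_of_prefix {σ : Set (List M)} (hσ : IsGame σ) {l p : List M}
    (hl : l ∈ σ) (hp : p <+: l) : p ∈ σ := by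
  induction l using List.reverseRecOn with
  | nil => rwa [List.prefix_nil.1 hp]
  | append_singleton l x ih =>
    rcases List.prefix_concat_iff.1 hp with rfl | hp
    · exact hl
    · exact ih (by simpa using hσ.2 _ hl (by simp)) hp

end Dialogue

local notation "𝒢ᵤ" => gameOf (tyTrans U11) none

theorem mem_gameU11_iff {l : List ℕ} :
    l ∈ 𝒢ᵤ ↔ l ∈ [[], [1], [1, 1], [1, 2], [1, 2, 1]] := by
  rcases l with _ | ⟨_ | _ | a, _ | ⟨_ | _ | _ | b, _ | ⟨_ | _ | c, _ | ⟨e, l⟩⟩⟩⟩ <;>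
    simp [gameOf, reach, tyTrans, U11, Ty.branches]

/-- The move at the `0`-based index `i` of `D11 n` (that is, at position `i + 1`). -/
def D11.entry (n i : ℕ) : ℕ × ℕ :=
  (if i = 0 then 0 else if i % 2 = 1 then 1 else i,
   if i % 2 = 1 ∧ i ≠ 2 * n + 1 then 2 else 1)

namespace D11

variable {n i : ℕ}

theorem entry_zero (n : ℕ) : entry n 0 = (0, 1) := rfl

theorem entry_last (n : ℕ) : entry n (2 * n + 1) = (1, 1) := by
  simp [entry]

theorem entry_of_odd (hi : i % 2 = 1) (hn : i ≠ 2 * n + 1) : entry n i = (1, 2) := by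
  simp [entry, hi, hn, show i ≠ 0 by omega]

theorem entry_fst_of_odd (hi : i % 2 = 1) : (entry n i).1 = 1 := by
  simp [entry, hi, show i ≠ 0 by omega]

theorem entry_of_even (h0 : i ≠ 0) (hi : i % 2 = 0) : entry n i = (i, 1) := by
  simp [entry, h0, hi]

theorem entry_congr {n' : ℕ} (hn : i ≠ 2 * n + 1) (hn' : i ≠ 2 * n' + 1) :
    entry n i = entry n' i := by
  simp [entry, hn, hn']

end D11

open D11

theorem flatMap_range_eq_map_entry {n m : ℕ} (h : n ≤ m) :
    (List.range n).flatMap (fun j => [(1, 2), (2 * (j + 1), 1)]) =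
      (List.range (2 * n)).map fun i => entry m (i + 1) := by
  induction n with
  | zero => rfl
  | succ n ih =>
    rw [List.range_succ, List.flatMap_append, ih (by omega),
      show 2 * (n + 1) = 2 * n + 1 + 1 by ring, List.range_succ, List.range_succ]
    simp [entry_of_odd (n := m) (i := 2 * n + 1) (by omega) (by omega),
      entry_of_even (n := m) (i := 2 * n + 2) (by omega) (by omega), mul_add]

theorem D11_eq_map (n : ℕ) : D11 n = (List.range (2 * n + 2)).map (entry n) := by
  rw [D11, flatMap_range_eq_map_entry le_rfl, List.range_succ, List.range_succ_eq_map]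
  simp [entry_zero, entry_last]

theorem length_D11 (n : ℕ) : (D11 n).length = 2 * n + 2 := by
  simp [D11_eq_map]

section Tau

variable {n : ℕ} {p q : List (ℕ × ℕ)} {x : ℕ × ℕ}

theorem mem_tau11_iff :
    p ∈ tau11 n ↔ p.length ≤ 2 * n + 2 ∧ ∀ i (hi : i < p.length), p[i] = entry n i := by
  simp [tau11, List.prefix_iff_getElem, D11_eq_map]

theorem getElem?_of_mem_tau11 {i : ℕ} (hp : p ∈ tau11 n) (hi : i < p.length) :
    p[i]? = some (entry n i) := by
  rw [List.getElem?_eq_getElem hi, (mem_tau11_iff.1 hp).2 i hi]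

theorem concat_mem_tau11_iff :
    p ++ [x] ∈ tau11 n ↔ p ∈ tau11 n ∧ p.length < 2 * n + 2 ∧ x = entry n p.length := by
  simp only [mem_tau11_iff, List.length_append, List.length_singleton]
  constructor
  · rintro ⟨hlen, h⟩
    refine ⟨⟨by omega, fun i hi => ?_⟩, by omega, ?_⟩
    · simpa [List.getElem_append_left hi] using h i (by omega)
    · simpa using h p.length (by omega)
  · rintro ⟨⟨-, h⟩, hlen, rfl⟩
    refine ⟨by omega, fun i hi => ?_⟩
    rcases Nat.lt_succ_iff_lt_or_eq.1 hi with hi | rfl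
    · simpa [List.getElem_append_left hi] using h i hi
    · simp

theorem mem_tau11_of_length_le {n' : ℕ} (hp : p ∈ tau11 n) (hn : p.length ≤ 2 * n + 1)
    (hn' : p.length ≤ 2 * n' + 1) : p ∈ tau11 n' := by
  rw [mem_tau11_iff] at hp ⊢
  exact ⟨by omega, fun i hi => (hp.2 i hi).trans (entry_congr (by omega) (by omega))⟩

theorem eq_D11_of_mem_tau11 (hp : p ∈ tau11 n) (hlen : p.length = 2 * n + 2) : p = D11 n :=
  List.IsPrefix.eq_of_length hp (by rw [hlen, length_D11])

theorem pointer_of_mem_tau11 {j : ℕ} (hp : p ∈ tau11 n) (h1 : 1 ≤ j) (hj : j ≤ p.length) :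
    pointer p j = some (entry n (j - 1)).1 := by
  rw [pointer, getElem?_of_mem_tau11 hp (by omega), Option.map_some]

theorem pointer_append_of_mem_tau11 {j : ℕ} (r : List (ℕ × ℕ)) (hq : q ∈ tau11 n) (h1 : 1 ≤ j)
    (hj : j ≤ q.length) : pointer (q ++ r) j = some (entry n (j - 1)).1 :=
  (pointer_append_of_le h1 hj).trans (pointer_of_mem_tau11 hq h1 hj)

theorem threadOf_of_mem_tau11 {ds : List ℕ} (hp : p ∈ tau11 n)
    (hds : ∀ j ∈ ds, 1 ≤ j ∧ j ≤ p.length) :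
    threadOf p ds = ds.map fun j => (entry n (j - 1)).2 := by
  rw [threadOf, ← List.filterMap_eq_map]
  refine List.filterMap_congr fun j hj => ?_
  rw [getElem?_of_mem_tau11 hp (by have := hds j hj; omega)]
  rfl

/-- Position `1` is the only initial move, even positions point to `1` and odd positions `j ≥ 3`
point to `j - 1`. -/
theorem chain_of_mem_tau11 {ds : List ℕ} (hp : p ∈ tau11 n) (hc : IsChain p ds) :
    ds = [] ∨ ds = [1] ∨ ∃ b, b % 2 = 0 ∧ (ds = [1, b] ∨ ds = [1, b, b + 1]) := by
  obtain ⟨hbd, hhd, hptr, -⟩ := hc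
  have hptr' : List.IsChain (fun a b => (entry n (b - 1)).1 = a) ds :=
    hptr.imp_of_mem_imp fun a b _ hb h => by
      rwa [pointer_of_mem_tau11 hp (hbd b hb).1 (hbd b hb).2, Option.some_inj] at h
  have hhd' : ∀ a, ds.head? = some a → (entry n (a - 1)).1 = 0 := fun a ha => by
    have := hbd a (List.mem_of_mem_head? ha)
    rw [← Option.some_inj, ← pointer_of_mem_tau11 hp this.1 this.2]
    exact hhd a ha
  have hpos : ∀ j ∈ ds, 1 ≤ j := fun j hj => (hbd j hj).1
  rcases ds with _ | ⟨a, _ | ⟨b, _ | ⟨c, _ | ⟨e, ds⟩⟩⟩⟩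
  · exact Or.inl rfl
  all_goals
    have ha := hhd' a rfl
    simp only [List.mem_cons, forall_eq_or_imp] at hpos
    simp only [List.isChain_cons_cons, List.isChain_singleton, and_true] at hptr'
    obtain rfl : a = 1 := by simp only [entry] at ha; split_ifs at ha <;> omega
  · exact Or.inr (Or.inl rfl)
  · simp only [entry] at hptr'
    exact Or.inr (Or.inr ⟨b, by split_ifs at hptr' <;> omega, Or.inl rfl⟩)
  · obtain ⟨hb, hc⟩ := hptr'
    simp only [entry] at hb hc
    refine Or.inr (Or.inr ⟨b, ?_, Or.inr ?_⟩) <;> split_ifs at hb hc <;> grind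
  · obtain ⟨hb, hc, he, -⟩ := hptr'
    simp only [entry] at hb hc he
    split_ifs at hb hc he <;> omega

theorem mem_PG_of_mem_tau11 (hp : p ∈ tau11 n) : p ∈ PG 𝒢ᵤ := by
  refine ⟨⟨fun j h1 hj α hα => ?_, fun ds hc => ?_⟩, fun j hj hjp => ?_⟩
  · rw [pointer_of_mem_tau11 hp h1 hj, Option.some_inj] at hα
    simp only [entry] at hα
    rw [Nat.odd_iff]
    split_ifs at hα <;> omega
  · have hlen := (mem_tau11_iff.1 hp).1
    rw [threadOf_of_mem_tau11 hp hc.1, mem_gameU11_iff]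
    rcases chain_of_mem_tau11 hp hc with rfl | rfl | ⟨b, hb, rfl | rfl⟩
    · simp
    · simp [entry_zero]
    · have hb1 := (hc.1 b (by simp)).1
      rcases eq_or_ne (b - 1) (2 * n + 1) with h | h
      · simp [entry_zero, h, entry_last]
      · simp [entry_zero, entry_of_odd (show (b - 1) % 2 = 1 by omega) h]
    · have hb1 := (hc.1 b (by simp)).1
      have hb2 := (hc.1 (b + 1) (by simp)).2
      simp [entry_zero, entry_of_odd (n := n) (i := b - 1) (by omega) (by omega),
        entry_of_even (n := n) (i := b) (by omega) hb]
  · rw [pointer_of_mem_tau11 hp hj.pos hjp, Option.some_inj]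
    simp only [entry, Nat.odd_iff] at hj ⊢
    split_ifs <;> omega

theorem concat_mem_tau11_of_even (hq : q ∈ tau11 n) (heven : q.length % 2 = 0)
    (h : q ++ [x] ∈ PG 𝒢ᵤ) : q ++ [x] ∈ tau11 n := by
  obtain ⟨α, m⟩ := x
  obtain ⟨⟨-, hresp⟩, hodd⟩ := h
  obtain rfl : α = q.length := by
    have := hodd (q.length + 1) (by rw [Nat.odd_iff]; omega) (by simp)
    rwa [pointer_concat_length, Option.some_inj, Nat.add_sub_cancel] at this
  have hlen := (mem_tau11_iff.1 hq).1
  rw [concat_mem_tau11_iff]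
  rcases Nat.eq_zero_or_pos q.length with h0 | hpos
  · obtain rfl : q = [] := List.eq_nil_of_length_eq_zero h0
    have := hresp [1] (isChain_singleton le_rfl (by simp) (by simp [pointer]))
    simp only [threadOf, List.length_nil, List.nil_append, mem_gameU11_iff] at this
    simp_all [entry_zero]
  · have hp1 : pointer (q ++ [(q.length, m)]) 1 = some 0 := by
      rw [pointer_append_of_mem_tau11 _ hq le_rfl hpos]; rfl
    have hpL : pointer (q ++ [(q.length, m)]) q.length = some 1 := by
      rw [pointer_append_of_mem_tau11 _ hq hpos le_rfl, entry_fst_of_odd (by omega)]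
    have hc := ((isChain_singleton le_rfl (by simp) hp1).concat (a := 1) rfl (by omega)
      (by simp) hpL).concat (by simp) (Nat.lt_succ_self _) (by simp) (pointer_concat_length _ _)
    have := hresp _ hc
    rw [threadOf_concat (q := q) _ (by grind), threadOf_of_mem_tau11 hq (by grind),
      mem_gameU11_iff] at this
    -- the thread through positions `1, L, L + 1` must be `1·2·1`
    rcases eq_or_ne (q.length - 1) (2 * n + 1) with hL | hL
    · simp [entry_zero, hL, entry_last] at this
    · obtain ⟨-, -, rfl⟩ : _ ∧ _ ∧ m = 1 := by simpa using this
      exact ⟨hq, by omega, (entry_of_even (by omega) heven).symm⟩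

theorem last_move_of_odd (hq : q ∈ tau11 n) (hodd : q.length % 2 = 1) (h : q ++ [x] ∈ PG 𝒢ᵤ) :
    x = (1, 1) ∨ x = (1, 2) := by
  obtain ⟨α, m⟩ := x
  obtain ⟨⟨hdia, hresp⟩, -⟩ := h
  have hlast : pointer (q ++ [(α, m)]) (q.length + 1) = some α := pointer_concat_length _ _
  obtain ⟨hαlt, hαodd⟩ := hdia (q.length + 1) (by omega) (by simp) α hlast
  rw [Nat.odd_iff] at hαodd
  have hp1 : pointer (q ++ [(α, m)]) 1 = some 0 := by
    rw [pointer_append_of_mem_tau11 _ hq le_rfl (by omega)]; rfl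
  obtain rfl : α = 1 := by
    by_contra hα
    -- positions `1, α - 1, α, L + 1` would form a thread of length four
    have hpα1 : pointer (q ++ [(α, m)]) (α - 1) = some 1 := by
      rw [pointer_append_of_mem_tau11 _ hq (by omega) (by omega), entry_fst_of_odd (by omega)]
    have hpα : pointer (q ++ [(α, m)]) α = some (α - 1) := by
      rw [pointer_append_of_mem_tau11 _ hq (by omega) (by omega),
        entry_of_even (by omega) (by omega)]
    have hc := (((isChain_singleton le_rfl (by simp) hp1).concat (a := 1) rfl (by omega)
      (by grind) hpα1).concat (by simp) (by omega) (by grind) hpα).concat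
      (by simp) (by omega) (by simp) hlast
    have := hresp _ hc
    rw [threadOf_concat (q := q) _ (by grind), threadOf_of_mem_tau11 hq (by grind),
      mem_gameU11_iff] at this
    simp at this
  have hc := (isChain_singleton le_rfl (by simp) hp1).concat (a := 1) rfl (by omega) (by simp) hlast
  have := hresp _ hc
  rw [threadOf_concat (q := q) _ (by grind), threadOf_of_mem_tau11 hq (by grind),
    mem_gameU11_iff] at this
  simpa [entry_zero] using this

theorem concat_mem_tau11_of_odd {k : ℕ} (hq : q ∈ tau11 n) (hk : q.length = 2 * k + 1) :
    q ++ [(1, 1)] ∈ tau11 k ∧ q ++ [(1, 2)] ∈ tau11 (k + 1) := by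
  have hlen := (mem_tau11_iff.1 hq).1
  refine ⟨concat_mem_tau11_iff.2 ⟨mem_tau11_of_length_le hq (by omega) (by omega), by omega, ?_⟩,
    concat_mem_tau11_iff.2 ⟨mem_tau11_of_length_le hq (by omega) (by omega), by omega, ?_⟩⟩
  · rw [hk, entry_last]
  · rw [hk, entry_of_odd (by omega) (by omega)]

theorem mem_PG_U11_iff : p ∈ PG 𝒢ᵤ ↔ ∃ n, p ∈ tau11 n := by
  refine ⟨fun h => ?_, fun ⟨n, hp⟩ => mem_PG_of_mem_tau11 hp⟩
  induction p using List.reverseRecOn with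
  | nil => exact ⟨0, List.nil_prefix⟩
  | append_singleton q x ih =>
    obtain ⟨n, hq⟩ := ih (mem_PG_of_append_mem h)
    rcases Nat.mod_two_eq_zero_or_one q.length with heven | hodd
    · exact ⟨n, concat_mem_tau11_of_even hq heven h⟩
    · obtain ⟨k, hk⟩ : ∃ k, q.length = 2 * k + 1 := ⟨q.length / 2, by omega⟩
      rcases last_move_of_odd hq hodd h with rfl | rfl
      · exact ⟨k, (concat_mem_tau11_of_odd hq hk).1⟩
      · exact ⟨k + 1, (concat_mem_tau11_of_odd hq hk).2⟩

end Tau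

theorem isStrategy_tau11 (n : ℕ) : IsStrategy (PG 𝒢ᵤ) (tau11 n) := by
  refine ⟨fun p hp => mem_PG_of_mem_tau11 hp,
    ⟨List.nil_prefix, fun p hp _ => (List.dropLast_prefix p).trans hp⟩, fun p hp hodd => ?_⟩
  have hlen := (mem_tau11_iff.1 hp).1
  rw [Nat.odd_iff] at hodd
  exact ⟨entry n p.length, concat_mem_tau11_iff.2 ⟨hp, by omega, rfl⟩,
    fun x hx => (concat_mem_tau11_iff.1 hx).2.2⟩

theorem live_tau11 (n : ℕ) : Live (PG 𝒢ᵤ) (tau11 n) := fun _ hp heven _ hx =>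
  concat_mem_tau11_of_even hp (Nat.even_iff.1 heven) hx

theorem finite_tau11 (n : ℕ) : (tau11 n).Finite :=
  (List.finite_toSet (D11 n).inits).subset fun _ hp => (List.mem_inits _ _).2 hp

theorem tau11_injective : Function.Injective tau11 := fun n n' h => by
  have h1 := (mem_tau11_iff.1 (h ▸ List.prefix_refl (D11 n) : D11 n ∈ tau11 n')).1
  have h2 := (mem_tau11_iff.1 (h ▸ List.prefix_refl (D11 n') : D11 n' ∈ tau11 n)).1
  rw [length_D11] at h1 h2
  omega

section Strategy

variable {σ : Set (List (ℕ × ℕ))}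

theorem eq_tau11_of_D11_mem {n : ℕ} (hσ : IsStrategy (PG 𝒢ᵤ) σ) (hD : D11 n ∈ σ) :
    σ = tau11 n := by
  obtain ⟨hsub, hgame, hresp⟩ := hσ
  refine Set.Subset.antisymm (fun p hp => ?_) fun p hp => hgame.mem_of_prefix hD hp
  induction p using List.reverseRecOn with
  | nil => exact List.nil_prefix
  | append_singleton q x ih =>
    have hqσ := hgame.mem_of_prefix hp (List.prefix_append _ _)
    have hq := ih hqσ
    rcases Nat.mod_two_eq_zero_or_one q.length with heven | hodd
    · exact concat_mem_tau11_of_even hq heven (hsub hp)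
    · have hlen := (mem_tau11_iff.1 hq).1
      have hnext : q ++ [entry n q.length] ∈ tau11 n :=
        concat_mem_tau11_iff.2 ⟨hq, by omega, rfl⟩
      obtain ⟨y, -, hy⟩ := hresp q hqσ (Nat.odd_iff.2 hodd)
      rwa [hy x hp, ← hy _ (hgame.mem_of_prefix hD hnext)]

theorem exists_D11_mem_of_finite (hσ : IsStrategy (PG 𝒢ᵤ) σ) (hlive : Live (PG 𝒢ᵤ) σ)
    (hfin : σ.Finite) : ∃ n, D11 n ∈ σ := by
  by_contra! hD
  have hodd : ∀ k, ∃ q ∈ σ, q.length = 2 * k + 1 := by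
    intro k
    induction k with
    | zero =>
      exact ⟨[(0, 1)], hlive [] hσ.2.1.1 (by simp) (0, 1)
        (mem_PG_of_mem_tau11 (n := 0) ⟨[(1, 1)], rfl⟩), rfl⟩
    | succ k ih =>
      obtain ⟨q, hqσ, hk⟩ := ih
      obtain ⟨n, hq⟩ := mem_PG_U11_iff.1 (hσ.1 hqσ)
      obtain ⟨x, hx, -⟩ := hσ.2.2 q hqσ (by rw [hk]; exact odd_two_mul_add_one k)
      obtain ⟨h11, h12⟩ := concat_mem_tau11_of_odd hq hk
      rcases last_move_of_odd hq (by omega) (hσ.1 hx) with rfl | rfl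
      · exact (hD k (eq_D11_of_mem_tau11 h11 (by simp [hk]) ▸ hx)).elim
      · have hnext := concat_mem_tau11_iff.2 ⟨h12, by grind, rfl⟩
        exact ⟨_, hlive _ hx (Nat.even_iff.2 (by grind)) _ (mem_PG_of_mem_tau11 hnext),
          by grind⟩
  obtain ⟨N, hN⟩ := (hfin.image List.length).bddAbove
  obtain ⟨q, hq, hlen⟩ := hodd N
  have := hN ⟨q, hq, rfl⟩
  omega

end Strategy

/-- For `U = X→(X→X)→X`, the finite live strategies on the
`P`-backtracking game `𝒫G(Δ_U)` are exactly the strategies `τ_n` for `n ∈ ℕ`;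
in particular they are in bijection with `ℕ`. -/
theorem finiteLiveStrategies_U11 :
    (∀ σ : Set (List (ℕ × ℕ)),
        (IsStrategy (PG (gameOf (tyTrans U11) none)) σ ∧
         Live (PG (gameOf (tyTrans U11) none)) σ ∧ σ.Finite) ↔
        ∃ n : ℕ, σ = tau11 n) ∧
    Function.Injective tau11 := by
  refine ⟨fun σ => ⟨fun ⟨hσ, hlive, hfin⟩ => ?_, ?_⟩, tau11_injective⟩
  · obtain ⟨n, hD⟩ := exists_D11_mem_of_finite hσ hlive hfin
    exact ⟨n, eq_tau11_of_D11_mem hσ hD⟩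
  · rintro ⟨n, rfl⟩
    exact ⟨isStrategy_tau11 n, live_tau11 n, finite_tau11 n⟩

end Hypergames
end

section
/- For every system F type T and quantifier ∀X occurring in T, the quantifier ∀X is available in T if and only if ∀X is one of the outermost quantifiers of the prenex form of T; that is, writing the prenex form of T as ∀X₁.…∀X_m. T₁→…→Tₙ→Z with each Tᵢ prenex, ∀X is available in T if and only if X ∈ {X₁,…,X_m}. -/
namespace Hypergames

/-! System F types (type variables are natural numbers). -/

/-- System F types, generated from type variables by implication `T → U` and
universal quantification `∀X.T`. -/
inductive FTy : Type
  | var : ℕ → FTy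
  | arrow : FTy → FTy → FTy
  | all : ℕ → FTy → FTy

/-- The free variables of a system F type. -/
def fvF : FTy → Set ℕ
  | .var X => {X}
  | .arrow A B => fvF A ∪ fvF B
  | .all X T => fvF T \ {X}

/-- Substitution `T[V/X]` of `V` for the free occurrences of `X` in `T`
(bound variables are assumed distinct from one another and from all free
variables, so no renaming is performed). -/
def substF : FTy → ℕ → FTy → FTy
  | .var Y, X, V => if Y = X then V else .var Y
  | .arrow A B, X, V => .arrow (substF A X V) (substF B X V)
  | .all Y T, X, V => if Y = X then .all Y T else .all Y (substF T X V)

/-- Whether `T` has an available quantifier: `∀X` is available in `T` if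
`T = ∀X.U`, or `T = U → T′` with `∀X` available in `T′`, or `T = ∀Y.T′` with
`∀X` available in `T′`. -/
def hasAvail : FTy → Bool
  | .var _ => false
  | .all _ _ => true
  | .arrow _ B => hasAvail B

/-- A type is resolved if it has no available quantifier, i.e. has the form
`T₁→…→Tₙ→X`. -/
def ResolvedF (T : FTy) : Prop := hasAvail T = false

/-- The variable bound by the leftmost available quantifier, if any. -/
def leftmostAvailVar : FTy → Option ℕ
  | .var _ => none
  | .all X _ => some X
  | .arrow _ B => leftmostAvailVar B

/-- Importing `V` into `T`: `T · V = T^X[V/X]` where `∀X` is the leftmost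
available quantifier of `T` and `T^X` deletes it (undefined if `T` has no
available quantifier). -/
def importOne : FTy → FTy → Option FTy
  | .var _, _ => none
  | .all X T, V => some (substF T X V)
  | .arrow A B, V => (importOne B V).map (.arrow A)

/-- Iterated importation `T · V₁ … V_k`. -/
def importList : FTy → List FTy → Option FTy
  | T, [] => some T
  | T, V :: Vs => (importOne T V).bind fun T' => importList T' Vs

/-- The branches `T₁,…,Tₙ` of a resolved type `T₁→…→Tₙ→X`. -/
def fbranches : FTy → List FTy
  | .var _ => []
  | .arrow A B => A :: fbranches B
  | .all _ _ => []

/-- The rightmost variable of a type (its colour when a target state). -/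
def fheadVar : FTy → ℕ
  | .var X => X
  | .arrow _ B => fheadVar B
  | .all _ T => fheadVar T

/-- Labels of system F transition systems: a branch choice `i ≥ 1` together
with a list of imports. -/
abbrev FLabel : Type := ℕ × List FTy

/-- The transition function of the system F transition system `Δ_T`: states
are system F types plus an initial state `⋆` (`none`); transitions are
`⋆ →^{⟨1,V₁…V_k⟩} T·V₁…V_k` whenever `T·V₁…V_k` is defined and resolved, and
`(T₁…Tₙ→X) →^{⟨i,V₁…V_k⟩} (U₁…U_m→Y)` whenever `1 ≤ i ≤ n` and
`Tᵢ·V₁…V_k = U₁…U_m→Y` is resolved. -/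
def fTrans (T : FTy) : Option FTy → FLabel → Option (Option FTy)
  | none, (i, Vs) =>
      if i = 1 then
        (importList T Vs).bind fun W =>
          if hasAvail W then none else some (some W)
      else none
  | some S, (i, Vs) =>
      if 1 ≤ i ∧ hasAvail S = false then
        (fbranches S)[i-1]?.bind fun Ti =>
          (importList Ti Vs).bind fun W =>
            if hasAvail W then none else some (some W)
      else none

/-! Prenex types and the prenexification rewrite. -/

/-- A system F type is prenex if it contains no subterm of the form
`T → ∀X.U`. -/
def IsPrenex : FTy → Prop
  | .var _ => True
  | .all _ T => IsPrenex T
  | .arrow A B => IsPrenex A ∧ IsPrenex B ∧ ∀ X U, B ≠ FTy.all X U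

/-- `∀`-introductions at the front followed by arrows:
`∀X₁.…∀X_m. T₁→…→Tₙ→X`. -/
def mkAll : List ℕ → FTy → FTy
  | [], T => T
  | X :: Xs, T => .all X (mkAll Xs T)

def mkArrows : List FTy → FTy → FTy
  | [], T => T
  | A :: As, T => .arrow A (mkArrows As T)

/-- One step of the prenexification rewrite
`T → ∀X.U ⇝ ∀X.(T → U)` (with `X` not free in `T`), applied anywhere. -/
inductive PrenexStep : FTy → FTy → Prop
  | here {A : FTy} {X : ℕ} {U : FTy} :
      X ∉ fvF A → PrenexStep (.arrow A (.all X U)) (.all X (.arrow A U))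
  | arrL {A A' B : FTy} :
      PrenexStep A A' → PrenexStep (.arrow A B) (.arrow A' B)
  | arrR {A B B' : FTy} :
      PrenexStep B B' → PrenexStep (.arrow A B) (.arrow A B')
  | allC {X : ℕ} {T T' : FTy} :
      PrenexStep T T' → PrenexStep (.all X T) (.all X T')

/-- `∀X` is available in `T`: `T = ∀X.U`, or `T = U → T′` with `∀X` available
in `T′`, or `T = ∀Y.T′` with `∀X` available in `T′`. -/
def AvailF (X : ℕ) : FTy → Prop
  | .var _ => False
  | .arrow _ B => AvailF X B
  | .all Y T => Y = X ∨ AvailF X T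

/-- The outermost quantified variables `X₁,…,X_m` of a type
`∀X₁.…∀X_m.U` (`U` not a quantified type). -/
def outerQuants : FTy → List ℕ
  | .all X T => X :: outerQuants T
  | _ => []

/-- The list of bound variables of a type. -/
def boundVars : FTy → List ℕ
  | .var _ => []
  | .arrow A B => boundVars A ++ boundVars B
  | .all X T => X :: boundVars T

/-- All bound variables are distinct from one another and from all free
variables. -/
def GoodVars (T : FTy) : Prop :=
  (boundVars T).Nodup ∧ ∀ X ∈ boundVars T, X ∉ fvF T

lemma avail_step {X : ℕ} {T T' : FTy} (h : PrenexStep T T') :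
    AvailF X T ↔ AvailF X T' := by
  induction h with
  | here _ => simp [AvailF]
  | arrL _ _ => simp [AvailF]
  | arrR _ ih => simpa [AvailF] using ih
  | allC _ ih => simp [AvailF, ih]

lemma avail_rtg {X : ℕ} {T P : FTy} (h : Relation.ReflTransGen PrenexStep T P) :
    AvailF X T ↔ AvailF X P := by
  induction h with
  | refl => rfl
  | tail _ step ih => exact ih.trans (avail_step step)

lemma avail_prenex {X : ℕ} {P : FTy} (hP : IsPrenex P) :
    AvailF X P ↔ X ∈ outerQuants P := by
  induction P with
  | var _ => simp [AvailF, outerQuants]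
  | arrow A B ihA ihB =>
    obtain ⟨_, hB, hnot⟩ := hP
    have : outerQuants B = [] := by
      cases B with
      | all Y U => exact absurd rfl (hnot Y U)
      | var _ => rfl
      | arrow _ _ => rfl
    simp [AvailF, outerQuants, ihB hB, this]
  | all Y T ih => simp [AvailF, outerQuants, ih hP, eq_comm]

/-- For every system F type `T` (with bound variables
distinct from one another and from the free variables) and quantifier `∀X`
occurring in `T`, `∀X` is available in `T` iff `X` is one of the outermost
quantified variables of the prenex form `∀X₁.…∀X_m. T₁→…→Tₙ→Z` of `T`. -/
theorem avail_iff_mem_outerQuants_of_prenexForm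
    (T : FTy) (hT : GoodVars T) (X : ℕ) (hX : X ∈ boundVars T)
    (P : FTy) (hTP : Relation.ReflTransGen PrenexStep T P)
    (hP : IsPrenex P) :
    AvailF X T ↔ X ∈ outerQuants P := by
  exact (avail_rtg hTP).trans (avail_prenex hP)

end Hypergames
end

section
/- For every system F type ∀X.T, the arena A(∀X.T) is isomorphic to the disjoint union, over all system F types U, of the arenas A(T[U/X]): there is a bijection between the nonempty traces of Δ_{∀X.T} and the disjoint union ⨿_U (nonempty traces of Δ_{T[U/X]}) which is an order isomorphism for the prefix orderings on each component. -/
namespace Hypergames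

/-- The arena `A(T)` of a system F type `T`: the set of nonempty traces of
the transition system `Δ_T`, ordered by the prefix relation. -/
def ArenaF (T : FTy) : Set (List FLabel) :=
  { l | l ≠ [] ∧ l ∈ gameOf (fTrans T) none }

/-!
A nonempty trace of `Δ_{∀X.T}` begins with a label `⟨1, U V₁…V_k⟩`, and
`(∀X.T)·U V₁…V_k = T[U/X]·V₁…V_k`, so this first move is exactly the first move
`⟨1, V₁…V_k⟩` of `Δ_{T[U/X]}`. From a type state the transition function does not
look at the root type, so the remaining moves agree as well. Splitting off the
first import `U` is therefore a prefix-preserving bijection onto `⨿_U A(T[U/X])`.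
-/

theorem reach_cons {Q L : Type} (tr : Q → L → Option Q) (q : Q) (l : L) (ls : List L) :
    reach tr q (l :: ls) = (tr q l).bind fun q' => reach tr q' ls :=
  rfl

theorem reach_congr_of_mapsTo {Q L : Type} {tr tr' : Q → L → Option Q} {s : Set Q}
    (hs : ∀ q ∈ s, ∀ l q', tr q l = some q' → q' ∈ s) (h : ∀ q ∈ s, tr q = tr' q) :
    ∀ ls, ∀ q ∈ s, reach tr q ls = reach tr' q ls
  | [], _, _ => rfl
  | l :: ls, q, hq => by
    rw [reach_cons, reach_cons, ← h q hq]
    rcases hl : tr q l with _ | q'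
    · rfl
    · exact reach_congr_of_mapsTo hs h ls q' (hs q hq l q' hl)

theorem isSome_of_fTrans_eq_some {A : FTy} {q q' : Option FTy} {l : FLabel}
    (h : fTrans A q l = some q') : q'.isSome := by
  obtain ⟨i, Vs⟩ := l
  cases q <;> simp only [fTrans] at h <;> split_ifs at h <;>
    simp_all only [Option.bind_eq_some_iff, Option.ite_none_left_eq_some] <;> aesop

theorem reach_fTrans_some (A B S : FTy) (ls : List FLabel) :
    reach (fTrans A) (some S) ls = reach (fTrans B) (some S) ls :=
  reach_congr_of_mapsTo (s := {q | q.isSome}) (fun _ _ _ _ => isSome_of_fTrans_eq_some)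
    (by rintro (_ | S) h; exacts [absurd h (by simp), rfl]) ls (some S) (by simp)

def pushImport (U : FTy) : List FLabel → List FLabel
  | [] => []
  | (i, Vs) :: rest => (i, U :: Vs) :: rest

theorem pushImport_eq_nil {U : FTy} {l : List FLabel} : pushImport U l = [] ↔ l = [] := by
  cases l <;> simp [pushImport]

theorem pushImport_inj {U U' : FTy} {l l' : List FLabel} (hl : l ≠ []) (hl' : l' ≠ []) :
    pushImport U l = pushImport U' l' ↔ U = U' ∧ l = l' := by
  obtain ⟨⟨i, Vs⟩, rest, rfl⟩ := List.exists_cons_of_ne_nil hl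
  obtain ⟨⟨i', Vs'⟩, rest', rfl⟩ := List.exists_cons_of_ne_nil hl'
  simp only [pushImport, List.cons.injEq, Prod.mk.injEq]
  tauto

theorem pushImport_prefix_pushImport_iff {U U' : FTy} {l l' : List FLabel}
    (hl : l ≠ []) (hl' : l' ≠ []) :
    pushImport U l <+: pushImport U' l' ↔ U = U' ∧ l <+: l' := by
  obtain ⟨⟨i, Vs⟩, rest, rfl⟩ := List.exists_cons_of_ne_nil hl
  obtain ⟨⟨i', Vs'⟩, rest', rfl⟩ := List.exists_cons_of_ne_nil hl'
  simp only [pushImport, List.cons_prefix_cons, Prod.mk.injEq, List.cons.injEq]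
  tauto

theorem reach_fTrans_all_pushImport (X : ℕ) (T U : FTy) (l : List FLabel) :
    reach (fTrans (.all X T)) none (pushImport U l) = reach (fTrans (substF T X U)) none l := by
  rcases l with _ | ⟨⟨i, Vs⟩, rest⟩
  · rfl
  · have hfirst : fTrans (.all X T) none (i, U :: Vs) = fTrans (substF T X U) none (i, Vs) := rfl
    simp only [pushImport, reach_cons, hfirst]
    rcases h : fTrans (substF T X U) none (i, Vs) with _ | (_ | S)
    · rfl
    · simpa using isSome_of_fTrans_eq_some h
    · exact reach_fTrans_some _ _ S rest

theorem pushImport_mem_arenaF_all_iff {X : ℕ} {T U : FTy} {l : List FLabel} :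
    pushImport U l ∈ ArenaF (.all X T) ↔ l ∈ ArenaF (substF T X U) := by
  simp only [ArenaF, gameOf, Set.mem_ofPred_eq, ne_eq, pushImport_eq_nil,
    reach_fTrans_all_pushImport]

/-- `∀X.T` is not resolved, so the first move of `Δ_{∀X.T}` imports at least one type. -/
theorem exists_eq_pushImport_of_mem_arenaF_all {X : ℕ} {T : FTy} {l : List FLabel}
    (hl : l ∈ ArenaF (.all X T)) : ∃ U l', l = pushImport U l' := by
  obtain ⟨hne, hreach⟩ := hl
  obtain ⟨⟨i, _ | ⟨U, Vs⟩⟩, rest, rfl⟩ := List.exists_cons_of_ne_nil hne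
  · have hstuck : fTrans (.all X T) none (i, []) = none := by
      simp [fTrans, importList, hasAvail]
    simp [gameOf, reach_cons, hstuck] at hreach
  · exact ⟨U, (i, Vs) :: rest, rfl⟩

noncomputable def arenaFAllEquiv (X : ℕ) (T : FTy) :
    (Σ U : FTy, { l // l ∈ ArenaF (substF T X U) }) ≃ { l // l ∈ ArenaF (.all X T) } :=
  Equiv.ofBijective (fun p => ⟨pushImport p.1 p.2.1, pushImport_mem_arenaF_all_iff.2 p.2.2⟩) <| by
    refine ⟨fun ⟨U, l, hl⟩ ⟨U', l', hl'⟩ h => ?_, fun ⟨l, hl⟩ => ?_⟩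
    · have h : pushImport U l = pushImport U' l' := congrArg Subtype.val h
      obtain ⟨rfl, rfl⟩ := (pushImport_inj hl.1 hl'.1).1 h
      rfl
    · obtain ⟨U, l', rfl⟩ := exists_eq_pushImport_of_mem_arenaF_all hl
      exact ⟨⟨U, l', pushImport_mem_arenaF_all_iff.1 hl⟩, rfl⟩

theorem coe_arenaFAllEquiv_apply (X : ℕ) (T : FTy)
    (p : Σ U : FTy, { l // l ∈ ArenaF (substF T X U) }) :
    (arenaFAllEquiv X T p).1 = pushImport p.1 p.2.1 :=
  rfl

/-- For every system F type `∀X.T`, the arena `A(∀X.T)` is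
isomorphic to the disjoint union, over all system F types `U`, of the arenas
`A(T[U/X])`: there is a bijection between the nonempty traces of `Δ_{∀X.T}`
and the disjoint union `⨿_U A(T[U/X])` which is an order isomorphism for the
prefix orderings on each component. -/
theorem arena_all_iso (X : ℕ) (T : FTy) :
    ∃ e : { l // l ∈ ArenaF (FTy.all X T) } ≃
          (Σ U : FTy, { l // l ∈ ArenaF (substF T X U) }),
      ∀ a b : { l // l ∈ ArenaF (FTy.all X T) },
        a.1 <+: b.1 ↔ ((e a).1 = (e b).1 ∧ (e a).2.1 <+: (e b).2.1) := by
  refine ⟨(arenaFAllEquiv X T).symm, fun a b => ?_⟩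
  obtain ⟨p, rfl⟩ := (arenaFAllEquiv X T).surjective a
  obtain ⟨q, rfl⟩ := (arenaFAllEquiv X T).surjective b
  rw [Equiv.symm_apply_apply, Equiv.symm_apply_apply, coe_arenaFAllEquiv_apply,
    coe_arenaFAllEquiv_apply]
  exact pushImport_prefix_pushImport_iff p.2.2.1 q.2.2.1

end Hypergames
end
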